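/- arXiv:math/0504308 — 8 statements merged into one kernel-verified Lean document; each statement's English description precedes it below -/
import Mathlib

section
/- Let A be an n×n real matrix (n ≥ 1) such that A + Aᵀ is negative definite, and let p_1,…,p_{n−1} ≥ 0. Then the feasible set S = {M ⪰ 0 : ⟨A_i, M⟩ = −p_i for i = 1,…,n−1} of the associated semidefinite program is nonempty, and there exists M₀ ∈ S such that ⟨A_n, M₀⟩ ≥ ⟨A_n, M⟩ for every M ∈ S; that is, the semidefinite program attains its maximum. -/
open Matrix

/-- Trace inner product on square matrices: ⟨X, Y⟩ = tr(XY). -/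
noncomputable def ip {m : ℕ} (X Y : Matrix (Fin m) (Fin m) ℝ) : ℝ := (X * Y).trace

/-- For an m×m matrix `A`, the symmetric matrix `A_i = e_i a_iᵀ + a_i e_iᵀ`,
whose i-th row and column equal the i-th row of `A` (with (i,i) entry `2 A i i`),
all other entries zero. -/
noncomputable def sdpMat {m : ℕ} (A : Matrix (Fin m) (Fin m) ℝ) (i : Fin m) :
    Matrix (Fin m) (Fin m) ℝ :=
  Matrix.of fun k l => (if k = i then A i l else 0) + (if l = i then A i k else 0)

/-- Feasibility for the semidefinite program associated to an (n+1)×(n+1) matrix `A`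
and data `p`: `M ⪰ 0` and `⟨A_i, M⟩ = -p_i` for every non-final index `i`. -/
def Feasible {n : ℕ} (A : Matrix (Fin (n + 1)) (Fin (n + 1)) ℝ)
    (p : Fin (n + 1) → ℝ) (M : Matrix (Fin (n + 1)) (Fin (n + 1)) ℝ) : Prop :=
  M.PosSemidef ∧ ∀ i : Fin (n + 1), i ≠ Fin.last n → ip (sdpMat A i) M = -(p i)

/-!
Summing the constraints, every feasible `M` satisfies `⟨A_n, M⟩ = ∑ p_i - tr (N M)` with
`N = -(A + Aᵀ)` positive definite. Writing `N = Sᴴ S` with `S` invertible gives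
`tr (N M) = tr (S M Sᴴ)`, and the congruence `M ↦ S M Sᴴ` is a homeomorphism preserving positive
semidefiniteness, so `{M ⪰ 0 | tr (N M) ≤ c}` is compact: the entries of a positive semidefinite
matrix are bounded by its trace. Hence every superlevel set of the objective on the closed feasible
set is compact, and the continuous objective attains its maximum. The diagonal matrix with entries
`p_i / (-2 a_ii)` (and `0` in the last slot) is feasible.
-/

namespace Matrix
variable {n : Type*} [Fintype n]

theorem isClosed_setOf_posSemidef : IsClosed {M : Matrix n n ℝ | M.PosSemidef} := by
  simp only [posSemidef_iff_dotProduct_mulVec, Set.ofPred_and, Set.ofPred_forall]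
  refine (isClosed_eq continuous_id.matrix_conjTranspose continuous_id).inter
    (isClosed_iInter fun x => isClosed_le continuous_const ?_)
  exact continuous_const.dotProduct (continuous_id.matrix_mulVec continuous_const)

variable [DecidableEq n]

theorem PosSemidef.abs_apply_le_trace {M : Matrix n n ℝ} (hM : M.PosSemidef) (k l : n) :
    |M k l| ≤ M.trace := by
  have hplus := hM.dotProduct_mulVec_nonneg (Pi.single k 1 + Pi.single l 1)
  have hminus := hM.dotProduct_mulVec_nonneg (Pi.single k 1 - Pi.single l 1)
  have hsym : M l k = M k l := by simpa using hM.isHermitian.apply k l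
  simp only [star_trivial, add_dotProduct, sub_dotProduct, mulVec_add, mulVec_sub, dotProduct_add,
    dotProduct_sub, mulVec_single_one, single_one_dotProduct, col_apply, hsym] at hplus hminus
  have hdiag (j : n) : M j j ≤ M.trace :=
    Finset.single_le_sum (f := fun j => M j j) (fun j _ => hM.diag_nonneg) (Finset.mem_univ j)
  rw [abs_le]
  constructor <;> linarith [hdiag k, hdiag l]

theorem isCompact_setOf_posSemidef_trace_le (c : ℝ) :
    IsCompact {M : Matrix n n ℝ | M.PosSemidef ∧ M.trace ≤ c} := by
  refine (isCompact_univ_pi fun _ => isCompact_univ_pi fun _ => isCompact_Icc).of_isClosed_subset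
    (isClosed_setOf_posSemidef.inter (isClosed_le continuous_id.matrix_trace continuous_const))
    fun M ⟨hM, hMc⟩ k _ l _ => abs_le.mp ((hM.abs_apply_le_trace k l).trans hMc)

theorem PosDef.exists_isUnit_eq_conjTranspose_mul_self {N : Matrix n n ℝ} (hN : N.PosDef) :
    ∃ S : Matrix n n ℝ, IsUnit S ∧ N = Sᴴ * S := by
  open scoped MatrixOrder in
  obtain ⟨S, rfl⟩ := CStarAlgebra.nonneg_iff_eq_star_mul_self.mp hN.posSemidef.nonneg
  exact ⟨S, isUnit_of_mul_isUnit_right hN.isUnit, rfl⟩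

theorem isCompact_setOf_posSemidef_trace_mul_le {N : Matrix n n ℝ} (hN : N.PosDef) (c : ℝ) :
    IsCompact {M : Matrix n n ℝ | M.PosSemidef ∧ (N * M).trace ≤ c} := by
  obtain ⟨S, hS, rfl⟩ := hN.exists_isUnit_eq_conjTranspose_mul_self
  lift S to (Matrix n n ℝ)ˣ using hS
  let conj : Matrix n n ℝ ≃ₜ Matrix n n ℝ :=
    { toFun := fun M => S * M * star (S : Matrix n n ℝ)
      invFun := fun X => (S⁻¹ : (Matrix n n ℝ)ˣ) * X * star ((S⁻¹ : (Matrix n n ℝ)ˣ) : Matrix n n ℝ)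
      left_inv := fun M => by simp [mul_assoc, ← star_mul]
      right_inv := fun X => by simp [mul_assoc, ← star_mul]
      continuous_toFun := by fun_prop
      continuous_invFun := by fun_prop }
  have : {M : Matrix n n ℝ | M.PosSemidef ∧ ((S : Matrix n n ℝ)ᴴ * S * M).trace ≤ c} =
      conj ⁻¹' {X | X.PosSemidef ∧ X.trace ≤ c} := by
    ext M
    change _ ↔ PosSemidef ((S : Matrix n n ℝ) * M * star (S : Matrix n n ℝ)) ∧
      ((S : Matrix n n ℝ) * M * star (S : Matrix n n ℝ)).trace ≤ c
    rw [S.isUnit.posSemidef_star_right_conjugate_iff, star_eq_conjTranspose, trace_mul_cycle]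
    exact Iff.rfl
  rw [this, conj.isCompact_preimage]
  exact isCompact_setOf_posSemidef_trace_le c

end Matrix

section
variable {m : ℕ} (A M : Matrix (Fin m) (Fin m) ℝ)

theorem continuous_ip (X : Matrix (Fin m) (Fin m) ℝ) : Continuous (ip X) :=
  (continuous_const.matrix_mul continuous_id).matrix_trace

theorem ip_sdpMat (i : Fin m) : ip (sdpMat A i) M = (A * M + M * Aᵀ) i i := by
  simp [ip, sdpMat, trace, mul_apply, add_mul, ite_mul, Finset.sum_add_distrib, mul_comm (M _ _)]

theorem sum_ip_sdpMat : ∑ i, ip (sdpMat A i) M = ((A + Aᵀ) * M).trace := by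
  simp only [ip_sdpMat, ← trace.eq_1, ← diag_apply]
  rw [trace_add, add_mul, trace_add, trace_mul_comm M]

theorem ip_sdpMat_diagonal (d : Fin m → ℝ) (i : Fin m) :
    ip (sdpMat A i) (diagonal d) = (A + Aᵀ) i i * d i := by
  simp only [ip_sdpMat, Matrix.add_apply, mul_diagonal, diagonal_mul, transpose_apply]
  ring

end

section
variable {n : ℕ} {A : Matrix (Fin (n + 1)) (Fin (n + 1)) ℝ} {p : Fin (n + 1) → ℝ}
  {M : Matrix (Fin (n + 1)) (Fin (n + 1)) ℝ}

theorem exists_feasible (hA : (-(A + Aᵀ)).PosDef) (hp : ∀ i, i ≠ Fin.last n → 0 ≤ p i) :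
    ∃ M, Feasible A p M := by
  have hdiag (i : Fin (n + 1)) : (A + Aᵀ) i i < 0 := neg_pos.mp hA.diag_pos
  let d i := if i = Fin.last n then 0 else -p i / (A + Aᵀ) i i
  refine ⟨diagonal d, PosSemidef.diagonal fun i => ?_, fun i hi => ?_⟩
  · dsimp only [d]
    split_ifs with hi
    · rfl
    · exact div_nonneg_of_nonpos (neg_nonpos.mpr (hp i hi)) (hdiag i).le
  · rw [ip_sdpMat_diagonal, show d i = _ from if_neg hi, mul_div_cancel₀ _ (hdiag i).ne]

theorem Feasible.ip_sdpMat_last_eq (hM : Feasible A p M) :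
    ip (sdpMat A (Fin.last n)) M = ∑ i : Fin n, p i.castSucc - (-(A + Aᵀ) * M).trace := by
  have hsum := sum_ip_sdpMat A M
  rw [Fin.sum_univ_castSucc] at hsum
  simp only [hM.2 _ (Fin.castSucc_lt_last _).ne, Finset.sum_neg_distrib] at hsum
  rw [neg_mul, trace_neg]
  linarith

variable (A p) in
theorem isClosed_setOf_feasible : IsClosed {M | Feasible A p M} := by
  simp only [Feasible, Set.ofPred_and, Set.ofPred_forall]
  exact isClosed_setOf_posSemidef.inter <| isClosed_iInter fun i => isClosed_iInter fun _ =>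
    isClosed_eq (continuous_ip _) continuous_const

end

/-- If A + Aᵀ is negative definite and p_i ≥ 0, then the feasible set of the associated
semidefinite program is nonempty and the program attains its maximum. -/
theorem sdp_feasible_and_attains_max (n : ℕ)
    (A : Matrix (Fin (n + 1)) (Fin (n + 1)) ℝ)
    (hA : (-(A + Aᵀ)).PosDef)
    (p : Fin (n + 1) → ℝ) (hp : ∀ i : Fin (n + 1), i ≠ Fin.last n → 0 ≤ p i) :
    (∃ M, Feasible A p M) ∧
      ∃ M₀, Feasible A p M₀ ∧
        ∀ M, Feasible A p M →
          ip (sdpMat A (Fin.last n)) M ≤ ip (sdpMat A (Fin.last n)) M₀ := by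
  obtain ⟨M₀, hM₀⟩ := exists_feasible hA hp
  set f := ip (sdpMat A (Fin.last n))
  have hK := isCompact_setOf_posSemidef_trace_mul_le hA (∑ i : Fin n, p i.castSucc - f M₀)
  have hsuperlevel : ∀ᶠ M in Filter.cocompact _ ⊓ Filter.principal {M | Feasible A p M},
      f M ≤ f M₀ := by
    filter_upwards [Filter.inter_mem_inf hK.compl_mem_cocompact (Filter.mem_principal_self _)]
    rintro M ⟨hMK, hM⟩
    by_contra! hlt
    exact hMK ⟨hM.1, by linarith [hM.ip_sdpMat_last_eq]⟩
  obtain ⟨M₁, hM₁, hmax⟩ :=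
    (continuous_ip _).continuousOn.exists_isMaxOn' (isClosed_setOf_feasible A p) hM₀ hsuperlevel
  exact ⟨⟨M₀, hM₀⟩, M₁, hM₁, fun M hM => hmax hM⟩
end

section
/- Let A be an n×n real matrix such that A + Aᵀ is negative definite, and let p_1,…,p_{n−1} ≥ 0. Then for every feasible matrix M of the associated semidefinite program (i.e., M ⪰ 0 with ⟨A_i, M⟩ = −p_i for i = 1,…,n−1), one has ⟨A_n, M⟩ ≤ p_1 + p_2 + ⋯ + p_{n−1}. In particular the objective of the semidefinite program is bounded above. (This uses that A_1 + A_2 + ⋯ + A_n = A + Aᵀ and that ⟨B, M⟩ ≥ 0 whenever B is positive definite and M ⪰ 0.) -/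
open Matrix

/-!
Summing the constraint matrices gives `A_1 + ⋯ + A_n = A + Aᵀ`, so
`⟨A_n, M⟩ = ⟨A + Aᵀ, M⟩ + p_1 + ⋯ + p_{n-1}`, and `⟨A + Aᵀ, M⟩ ≤ 0` because the trace inner
product of two positive semidefinite matrices is nonnegative: writing `M = Bᴴ B`,
`tr(P M) = tr(B P Bᴴ) ≥ 0`.
-/

open scoped MatrixOrder ComplexOrder in
theorem Matrix.PosSemidef.trace_mul_nonneg {ι 𝕜 : Type*} [Fintype ι] [DecidableEq ι] [RCLike 𝕜]
    {P M : Matrix ι ι 𝕜} (hP : P.PosSemidef) (hM : M.PosSemidef) : 0 ≤ (P * M).trace := by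
  obtain ⟨B, rfl⟩ := CStarAlgebra.nonneg_iff_eq_star_mul_self.mp hM.nonneg
  rw [star_eq_conjTranspose, ← Matrix.mul_assoc, trace_mul_comm, ← Matrix.mul_assoc]
  exact (hP.mul_mul_conjTranspose_same B).trace_nonneg

theorem ip_nonpos_of_neg_posSemidef {m : ℕ} {B M : Matrix (Fin m) (Fin m) ℝ}
    (hB : (-B).PosSemidef) (hM : M.PosSemidef) : ip B M ≤ 0 := by
  simpa only [ip, Matrix.neg_mul, trace_neg, neg_nonneg] using hB.trace_mul_nonneg hM

theorem sum_ip_left {m : ℕ} {ι : Type*} (s : Finset ι) (X : ι → Matrix (Fin m) (Fin m) ℝ)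
    (Y : Matrix (Fin m) (Fin m) ℝ) : ∑ i ∈ s, ip (X i) Y = ip (∑ i ∈ s, X i) Y := by
  simp only [ip, Finset.sum_mul, trace_sum]

theorem sum_sdpMat {m : ℕ} (A : Matrix (Fin m) (Fin m) ℝ) : ∑ i, sdpMat A i = A + Aᵀ := by
  ext k l
  simp [sdpMat, Matrix.sum_apply, Finset.sum_add_distrib]

theorem sdp_objective_bounded_general (n : ℕ)
    (A : Matrix (Fin (n + 1)) (Fin (n + 1)) ℝ)
    (hA : (-(A + Aᵀ)).PosDef)
    (p : Fin (n + 1) → ℝ) :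
    ∀ M, Feasible A p M →
      ip (sdpMat A (Fin.last n)) M ≤ ∑ i ∈ Finset.univ.erase (Fin.last n), p i := by
  rintro M ⟨hM, hconstr⟩
  have htotal : ∑ i, ip (sdpMat A i) M ≤ 0 := by
    rw [sum_ip_left, sum_sdpMat]
    exact ip_nonpos_of_neg_posSemidef hA.posSemidef hM
  have hrest : ∑ i ∈ Finset.univ.erase (Fin.last n), ip (sdpMat A i) M
      = -∑ i ∈ Finset.univ.erase (Fin.last n), p i := by
    rw [← Finset.sum_neg_distrib]
    exact Finset.sum_congr rfl fun i hi => hconstr i (Finset.ne_of_mem_erase hi)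
  rw [← Finset.sum_erase_add _ _ (Finset.mem_univ (Fin.last n)), hrest] at htotal
  linarith

/-- Every feasible matrix `M` of the associated semidefinite program satisfies
`⟨A_n, M⟩ ≤ p₁ + ⋯ + p_{n-1}`; the objective is bounded above. -/
theorem sdp_objective_bounded (n : ℕ)
    (A : Matrix (Fin (n + 1)) (Fin (n + 1)) ℝ)
    (hA : (-(A + Aᵀ)).PosDef)
    (p : Fin (n + 1) → ℝ) (hp : ∀ i : Fin (n + 1), i ≠ Fin.last n → 0 ≤ p i) :
    ∀ M, Feasible A p M →
      ip (sdpMat A (Fin.last n)) M ≤ ∑ i ∈ Finset.univ.erase (Fin.last n), p i :=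
  sdp_objective_bounded_general n A hA p
end

section
/- Fix symmetric n×n real matrices B_1,…,B_k and real numbers α_1,…,α_k. If there exists a positive semidefinite matrix M with ⟨B_i, M⟩ = α_i for i = 1,…,k, then there exists a positive semidefinite matrix M₀ with ⟨B_i, M₀⟩ = α_i for i = 1,…,k and rank(M₀) ≤ ⌊(√(8k+1) − 1)/2⌋. -/
open Matrix

/-!
Write a solution as `M = A Aᵀ` with `A` of size `n × r`, `r = rank M`. The matrices `A X Aᵀ` with
`X` symmetric of size `r` are parametrised by a space of dimension `(r + 1).choose 2`; if this
exceeds `k`, some nonzero symmetric `X` leaves all `k` constraints unchanged. Scaling `X` by the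
inverse of its eigenvalue of largest modulus makes `1 - X` positive semidefinite and singular, so
`A (1 - X) Aᵀ` is a solution of smaller rank. Descending, one reaches a solution with
`(r + 1).choose 2 ≤ k`, i.e. `r ≤ (√(8k + 1) - 1) / 2`.
-/

namespace Matrix

variable {n : Type*} [Fintype n] [DecidableEq n]

lemma IsHermitian.eq_mul_diagonal_mul_transpose {A : Matrix n n ℝ} (hA : A.IsHermitian) :
    A = (hA.eigenvectorUnitary : Matrix n n ℝ) * diagonal hA.eigenvalues *
      (hA.eigenvectorUnitary : Matrix n n ℝ)ᵀ := by
  conv_lhs => rw [hA.spectral_theorem]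
  rfl

lemma PosSemidef.exists_eq_mul_transpose {M : Matrix n n ℝ} (hM : M.PosSemidef) :
    ∃ A : Matrix n (Fin M.rank) ℝ, M = A * Aᵀ := by
  set U : Matrix n n ℝ := (hM.isHermitian.eigenvectorUnitary : Matrix n n ℝ)
  set μ := hM.isHermitian.eigenvalues
  let e : Fin M.rank ≃ {l // μ l ≠ 0} :=
    (Fintype.equivFinOfCardEq hM.isHermitian.rank_eq_card_non_zero_eigs.symm).symm
  refine ⟨of fun i j => U i (e j) * √(μ (e j)), ?_⟩
  ext i i'
  have hM_apply : M i i' = ∑ l, U i l * μ l * U i' l := by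
    conv_lhs => rw [hM.isHermitian.eq_mul_diagonal_mul_transpose]
    rw [mul_apply]
    simp only [mul_diagonal, transpose_apply, U, μ]
  have hzero : ∑ l : {l // ¬μ l ≠ 0}, U i l * μ l * U i' l = 0 :=
    Finset.sum_eq_zero fun l _ => by simp [not_not.mp l.2]
  rw [hM_apply, ← Fintype.sum_subtype_add_sum_subtype (fun l => μ l ≠ 0), hzero, add_zero,
    mul_apply, ← e.sum_comp]
  refine Finset.sum_congr rfl fun j _ => ?_
  have hsq := Real.mul_self_sqrt (hM.eigenvalues_nonneg (e j))
  simp only [of_apply, transpose_apply]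
  linear_combination -U i (e j) * U i' (e j) * hsq

lemma IsHermitian.exists_posSemidef_one_sub_smul_rank_lt {X : Matrix n n ℝ} (hX : X.IsHermitian)
    (hX0 : X ≠ 0) : ∃ c : ℝ, (1 - c • X).PosSemidef ∧ (1 - c • X).rank < Fintype.card n := by
  set U : Matrix n n ℝ := (hX.eigenvectorUnitary : Matrix n n ℝ)
  set ν := hX.eigenvalues
  obtain ⟨i₀, hi₀⟩ : ∃ i, ν i ≠ 0 := Function.ne_iff.mp (hX.eigenvalues_eq_zero_iff.not.mpr hX0)
  obtain ⟨j, -, hj⟩ := Finset.univ.exists_max_image (fun i => |ν i|) ⟨i₀, Finset.mem_univ _⟩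
  have hνj : ν j ≠ 0 := abs_pos.mp ((abs_pos.mpr hi₀).trans_le (hj i₀ (Finset.mem_univ _)))
  set d : n → ℝ := fun i => 1 - (ν j)⁻¹ * ν i
  have hUU : U * Uᵀ = 1 := mem_unitaryGroup_iff.mp hX.eigenvectorUnitary.2
  have hdecomp : 1 - (ν j)⁻¹ • X = U * diagonal d * Uᵀ := by
    have hd : diagonal d = 1 - (ν j)⁻¹ • diagonal ν := by
      ext a b
      by_cases hab : a = b <;> simp [d, hab]
    rw [hd, Matrix.mul_sub, Matrix.sub_mul, Matrix.mul_one, hUU, Matrix.mul_smul, Matrix.smul_mul,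
      ← hX.eq_mul_diagonal_mul_transpose]
  have hd_nonneg : ∀ i, 0 ≤ d i := fun i => by
    have : (ν j)⁻¹ * ν i ≤ 1 := calc
      _ ≤ |(ν j)⁻¹ * ν i| := le_abs_self _
      _ = |ν i| / |ν j| := by rw [abs_mul, abs_inv, inv_mul_eq_div]
      _ ≤ 1 := div_le_one_of_le₀ (hj i (Finset.mem_univ _)) (abs_nonneg _)
    exact sub_nonneg.mpr this
  refine ⟨(ν j)⁻¹, ?_, ?_⟩
  · rw [hdecomp, ← conjTranspose_eq_transpose_of_trivial]
    exact (posSemidef_diagonal_iff.mpr hd_nonneg).mul_mul_conjTranspose_same U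
  · calc (1 - (ν j)⁻¹ • X).rank ≤ (diagonal d).rank := by
          rw [hdecomp]; exact (rank_mul_le_left _ _).trans (rank_mul_le_right _ _)
      _ = Fintype.card {i // d i ≠ 0} := rank_diagonal d
      _ < Fintype.card n := Fintype.card_subtype_lt (x := j) (by simp [d, hνj])

section Sym2

variable {ι K : Type*} [Field K]

def ofSym2 : (Sym2 ι → K) →ₗ[K] Matrix ι ι K where
  toFun c := of fun p q => c s(p, q)
  map_add' _ _ := rfl
  map_smul' _ _ := rfl

lemma isSymm_ofSym2 (c : Sym2 ι → K) : (ofSym2 c).IsSymm :=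
  IsSymm.ext fun _ _ => congrArg c (Sym2.eq_swap)

lemma ofSym2_injective : Function.Injective (ofSym2 : (Sym2 ι → K) → Matrix ι ι K) := by
  intro c c' h
  funext z
  induction z using Sym2.ind with
  | _ p q => exact congrFun (congrFun h p) q

lemma exists_isSymm_ne_zero_apply_eq_zero [Fintype ι] {V : Type*} [AddCommGroup V] [Module K V]
    [FiniteDimensional K V] (L : Matrix ι ι K →ₗ[K] V)
    (h : Module.finrank K V < Fintype.card (Sym2 ι)) : ∃ X, X.IsSymm ∧ X ≠ 0 ∧ L X = 0 := by
  have hker : LinearMap.ker (L ∘ₗ ofSym2) ≠ ⊥ :=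
    LinearMap.ker_ne_bot_of_finrank_lt (by rwa [Module.finrank_fintype_fun_eq_card])
  obtain ⟨c, hc, hc0⟩ := (Submodule.ne_bot_iff _).mp hker
  exact ⟨ofSym2 c, isSymm_ofSym2 c, (map_ne_zero_iff _ ofSym2_injective).mpr hc0, hc⟩

end Sym2

variable {V : Type*} [AddCommGroup V] [Module ℝ V] [FiniteDimensional ℝ V]

lemma PosSemidef.exists_rank_lt_of_finrank_lt {M : Matrix n n ℝ} (hM : M.PosSemidef)
    (Φ : Matrix n n ℝ →ₗ[ℝ] V)
    (h : Module.finrank ℝ V < Fintype.card (Sym2 (Fin M.rank))) :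
    ∃ M', M'.PosSemidef ∧ Φ M' = Φ M ∧ M'.rank < M.rank := by
  obtain ⟨A, hA⟩ := hM.exists_eq_mul_transpose
  set conj := mulRightLinearMap n ℝ Aᵀ ∘ₗ mulLeftLinearMap (Fin M.rank) ℝ A
  obtain ⟨X, hXsymm, hX0, hΦX⟩ := exists_isSymm_ne_zero_apply_eq_zero (Φ ∘ₗ conj) h
  obtain ⟨c, hY, hYrank⟩ :=
    (isHermitian_iff_isSymm.mpr hXsymm).exists_posSemidef_one_sub_smul_rank_lt hX0
  refine ⟨A * (1 - c • X) * Aᵀ, ?_, ?_, ?_⟩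
  · simpa only [conjTranspose_eq_transpose_of_trivial] using hY.mul_mul_conjTranspose_same A
  · have : A * (1 - c • X) * Aᵀ = M - c • conj X := by
      simp [hA, conj, Matrix.mul_sub, Matrix.sub_mul, Matrix.mul_assoc]
    rw [this, map_sub, map_smul, ← LinearMap.comp_apply, hΦX, smul_zero, sub_zero]
  · calc (A * (1 - c • X) * Aᵀ).rank ≤ (1 - c • X).rank :=
          (rank_mul_le_left _ _).trans (rank_mul_le_right _ _)
      _ < _ := by simpa using hYrank

theorem PosSemidef.exists_choose_two_rank_le_finrank {M : Matrix n n ℝ} (hM : M.PosSemidef)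
    (Φ : Matrix n n ℝ →ₗ[ℝ] V) :
    ∃ M', M'.PosSemidef ∧ Φ M' = Φ M ∧ (M'.rank + 1).choose 2 ≤ Module.finrank ℝ V := by
  induction h : M.rank using Nat.strong_induction_on generalizing M with
  | _ r ih =>
    by_cases hr : (r + 1).choose 2 ≤ Module.finrank ℝ V
    · exact ⟨M, hM, rfl, h ▸ hr⟩
    obtain ⟨M', hM', hΦM', hlt⟩ :=
      hM.exists_rank_lt_of_finrank_lt Φ (by rw [Sym2.card, Fintype.card_fin, h]; omega)
    obtain ⟨M'', hM'', hΦM'', hrank⟩ := ih _ (h ▸ hlt) hM' rfl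
    exact ⟨M'', hM'', hΦM''.trans hΦM', hrank⟩

end Matrix

lemma le_floor_of_choose_two_le {r k : ℕ} (h : (r + 1).choose 2 ≤ k) :
    r ≤ ⌊(Real.sqrt (8 * k + 1) - 1) / 2⌋₊ := by
  have hk : ((r + 1) * r / 2 : ℝ) ≤ k := by
    simpa [Nat.cast_choose_two] using (Nat.cast_le (α := ℝ)).mpr h
  have hsqrt : (2 * r + 1 : ℝ) ≤ Real.sqrt (8 * k + 1) :=
    Real.le_sqrt_of_sq_le (by nlinarith)
  apply Nat.le_floor
  linarith

theorem low_rank_feasible_solution_general (n k : ℕ)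
    (B : Fin k → Matrix (Fin n) (Fin n) ℝ)
    (α : Fin k → ℝ)
    (hex : ∃ M : Matrix (Fin n) (Fin n) ℝ, M.PosSemidef ∧ ∀ i, ip (B i) M = α i) :
    ∃ M₀ : Matrix (Fin n) (Fin n) ℝ, M₀.PosSemidef ∧ (∀ i, ip (B i) M₀ = α i) ∧
      M₀.rank ≤ ⌊(Real.sqrt (8 * k + 1) - 1) / 2⌋₊ := by
  obtain ⟨M, hM, hMα⟩ := hex
  let Φ : Matrix (Fin n) (Fin n) ℝ →ₗ[ℝ] Fin k → ℝ :=
    LinearMap.pi fun i => traceLinearMap _ ℝ ℝ ∘ₗ mulLeftLinearMap _ ℝ (B i)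
  obtain ⟨M₀, hM₀, hΦ, hrank⟩ := hM.exists_choose_two_rank_le_finrank Φ
  refine ⟨M₀, hM₀, fun i => (congrFun hΦ i).trans (hMα i), le_floor_of_choose_two_le ?_⟩
  simpa using hrank

/-- Barvinok: if the system `⟨B_i, M⟩ = α_i`, `M ⪰ 0` has a solution, it has a solution of
rank at most `⌊(√(8k+1) − 1)/2⌋`. -/
theorem low_rank_feasible_solution (n k : ℕ)
    (B : Fin k → Matrix (Fin n) (Fin n) ℝ) (hB : ∀ i, (B i).IsSymm)
    (α : Fin k → ℝ)
    (hex : ∃ M : Matrix (Fin n) (Fin n) ℝ, M.PosSemidef ∧ ∀ i, ip (B i) M = α i) :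
    ∃ M₀ : Matrix (Fin n) (Fin n) ℝ, M₀.PosSemidef ∧ (∀ i, ip (B i) M₀ = α i) ∧
      M₀.rank ≤ ⌊(Real.sqrt (8 * k + 1) - 1) / 2⌋₊ :=
  low_rank_feasible_solution_general n k B α hex
end

section
/- Let A be a 2×2 real matrix such that A + Aᵀ is negative definite, and let p_1 ≥ 0. Then the associated semidefinite program (maximize ⟨A_2, M⟩ over M ⪰ 0 with ⟨A_1, M⟩ = −p_1) has an optimal solution M₀ with rank(M₀) ≤ 1. -/
open Matrix

/-!
Weak duality with a singular dual certificate. If `S = -(A₂ + μ A₁) ⪰ 0`, every feasible `M`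
satisfies `⟨A₂, M⟩ = μ p₁ - ⟨S, M⟩ ≤ μ p₁`, and a multiple of `w wᵀ` with `S w = 0` attains the
bound as soon as `wᵀ A₁ w < 0`. For `A = !![a, b; c, d]` the multiplier is the smaller root
`μ = κ²`, `κ = c / (√(ad) + √(ad - bc))`, of `det S = 0`; then `S` is a nonnegative multiple of
`v vᵀ` with `v = (√(ad) κ, d)`, its kernel is spanned by `w = (d, -√(ad) κ)`, and
`wᵀ A₁ w = 2 d √(ad) √(ad - bc) < 0`.
-/

section TraceInner

variable {m : ℕ}

lemma ip_add_smul_left (C B M : Matrix (Fin m) (Fin m) ℝ) (t : ℝ) :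
    ip (C + t • B) M = ip C M + t * ip B M := by
  simp [ip, Matrix.add_mul, trace_add, trace_smul]

lemma ip_neg_left (C M : Matrix (Fin m) (Fin m) ℝ) : ip (-C) M = -ip C M := by
  simp [ip]

lemma ip_smul_right (C M : Matrix (Fin m) (Fin m) ℝ) (t : ℝ) : ip C (t • M) = t * ip C M := by
  simp [ip, trace_smul]

lemma ip_vecMulVec_self (C : Matrix (Fin m) (Fin m) ℝ) (w : Fin m → ℝ) :
    ip C (vecMulVec w w) = w ⬝ᵥ C *ᵥ w := by
  rw [ip, mul_vecMulVec, trace_vecMulVec, dotProduct_comm]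

open scoped MatrixOrder in
lemma ip_nonneg_of_posSemidef {S M : Matrix (Fin m) (Fin m) ℝ} (hS : S.PosSemidef)
    (hM : M.PosSemidef) : 0 ≤ ip S M := by
  obtain ⟨B, rfl⟩ := CStarAlgebra.nonneg_iff_eq_star_mul_self.mp hS.nonneg
  rw [ip, star_eq_conjTranspose, Matrix.mul_assoc, trace_mul_comm]
  exact (hM.mul_mul_conjTranspose_same B).trace_nonneg

end TraceInner

section DualCertificate

variable {m : ℕ} {C B : Matrix (Fin m) (Fin m) ℝ} {μ p : ℝ}

lemma ip_le_of_dual_feasible (hS : (-(C + μ • B)).PosSemidef) {M : Matrix (Fin m) (Fin m) ℝ}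
    (hM : M.PosSemidef) (hMB : ip B M = -p) : ip C M ≤ μ * p := by
  have h := ip_nonneg_of_posSemidef hS hM
  rw [ip_neg_left, ip_add_smul_left, hMB] at h
  linarith

theorem exists_rank_one_optimal_of_dual_certificate {w : Fin m → ℝ}
    (hS : (-(C + μ • B)).PosSemidef) (hw : (C + μ • B) *ᵥ w = 0) (hwB : w ⬝ᵥ B *ᵥ w < 0)
    (hp : 0 ≤ p) :
    ∃ M₀ : Matrix (Fin m) (Fin m) ℝ, M₀.PosSemidef ∧ ip B M₀ = -p ∧ M₀.rank ≤ 1 ∧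
      ∀ M : Matrix (Fin m) (Fin m) ℝ, M.PosSemidef → ip B M = -p → ip C M ≤ ip C M₀ := by
  set s := p / -(w ⬝ᵥ B *ᵥ w) with hs
  have hM₀B : ip B (s • vecMulVec w w) = -p := by
    rw [ip_smul_right, ip_vecMulVec_self, hs, div_neg, neg_mul, div_mul_cancel₀ _ hwB.ne]
  have hM₀C : ip C (s • vecMulVec w w) = μ * p := by
    have h := ip_add_smul_left C B (s • vecMulVec w w) μ
    rw [hM₀B, ip_smul_right, ip_vecMulVec_self, hw, dotProduct_zero] at h
    linarith
  refine ⟨s • vecMulVec w w, ?_, hM₀B, ?_, fun M hM hMB => ?_⟩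
  · simpa using (posSemidef_vecMulVec_self_star w).smul (div_nonneg hp (neg_nonneg.mpr hwB.le))
  · rw [← smul_vecMulVec]
    exact rank_vecMulVec_le _ _
  · exact hM₀C ▸ ip_le_of_dual_feasible hS hM hMB

end DualCertificate

section FinTwo

variable (A : Matrix (Fin 2) (Fin 2) ℝ)

lemma sdpMat_fin_two_zero : sdpMat A 0 = !![2 * A 0 0, A 0 1; A 0 1, 0] := by
  ext i j
  fin_cases i <;> fin_cases j <;> simp [sdpMat, two_mul]

lemma sdpMat_fin_two_one : sdpMat A 1 = !![0, A 1 0; A 1 0, 2 * A 1 1] := by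
  ext i j
  fin_cases i <;> fin_cases j <;> simp [sdpMat, two_mul]

lemma entry_bounds_of_posDef_neg_add_transpose (hA : (-(A + Aᵀ)).PosDef) :
    A 1 1 < 0 ∧ 0 < A 0 0 * A 1 1 ∧ A 0 1 * A 1 0 < A 0 0 * A 1 1 := by
  have h₀ : 0 < (-(A + Aᵀ)) 0 0 := hA.diag_pos
  have h₁ : 0 < (-(A + Aᵀ)) 1 1 := hA.diag_pos
  have hdet := hA.det_pos
  simp only [det_fin_two, Matrix.neg_apply, Matrix.add_apply, transpose_apply] at h₀ h₁ hdet
  exact ⟨by linarith, by nlinarith, by nlinarith [sq_nonneg (A 0 1 - A 1 0)]⟩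

end FinTwo

lemma exists_dual_certificate_fin_two (A : Matrix (Fin 2) (Fin 2) ℝ) (hd : A 1 1 < 0)
    (had : 0 < A 0 0 * A 1 1) (hdet : A 0 1 * A 1 0 < A 0 0 * A 1 1) :
    ∃ (μ : ℝ) (w : Fin 2 → ℝ), (-(sdpMat A 1 + μ • sdpMat A 0)).PosSemidef ∧
      (sdpMat A 1 + μ • sdpMat A 0) *ᵥ w = 0 ∧ w ⬝ᵥ sdpMat A 0 *ᵥ w < 0 := by
  obtain ⟨α, hα_pos, hα⟩ : ∃ α : ℝ, 0 < α ∧ α ^ 2 = A 0 0 * A 1 1 :=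
    ⟨_, Real.sqrt_pos.mpr had, Real.sq_sqrt had.le⟩
  obtain ⟨β, hβ_pos, hβ⟩ : ∃ β : ℝ, 0 < β ∧ β ^ 2 = A 0 0 * A 1 1 - A 0 1 * A 1 0 :=
    ⟨_, Real.sqrt_pos.mpr (by linarith), Real.sq_sqrt (by linarith)⟩
  obtain ⟨κ, hc⟩ : ∃ κ : ℝ, A 1 0 = κ * (α + β) := ⟨A 1 0 / (α + β), by field_simp⟩
  have hb : A 0 1 * κ = α - β := by
    refine mul_right_cancel₀ (b := α + β) (by positivity) ?_
    linear_combination -A 0 1 * hc - hα + hβ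
  have hcb : A 1 0 + κ ^ 2 * A 0 1 = 2 * α * κ := by linear_combination hc + κ * hb
  refine ⟨κ ^ 2, ![A 1 1, -(α * κ)], ?_, ?_, ?_⟩
  · have hS : -(sdpMat A 1 + κ ^ 2 • sdpMat A 0) =
        (-2 / A 1 1) • vecMulVec ![α * κ, A 1 1] ![α * κ, A 1 1] := by
      have hd₀ : A 1 1 ≠ 0 := hd.ne
      rw [sdpMat_fin_two_zero, sdpMat_fin_two_one]
      ext i j
      fin_cases i <;> fin_cases j <;> simp <;> field_simp
      · linear_combination κ ^ 2 * hα
      · linear_combination -hcb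
      · linear_combination -hcb
    rw [hS]
    simpa using (posSemidef_vecMulVec_self_star ![α * κ, A 1 1]).smul
      (div_nonneg_of_nonpos (by norm_num) hd.le)
  · rw [sdpMat_fin_two_zero, sdpMat_fin_two_one]
    ext i
    fin_cases i <;> simp
    · linear_combination -(α * κ) * hcb - 2 * κ ^ 2 * hα
    · linear_combination A 1 1 * hcb
  · rw [sdpMat_fin_two_zero]
    have : ![A 1 1, -(α * κ)] ⬝ᵥ !![2 * A 0 0, A 0 1; A 0 1, 0] *ᵥ ![A 1 1, -(α * κ)] =
        2 * A 1 1 * (α * β) := by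
      simp [dotProduct, mulVec, Fin.sum_univ_two]
      linear_combination -2 * A 1 1 * α * hb - 2 * A 1 1 * hα
    rw [this]
    exact mul_neg_of_neg_of_pos (by linarith) (mul_pos hα_pos hβ_pos)

/-- For a 2×2 matrix `A` with `A + Aᵀ` negative definite, the associated semidefinite
program (maximize `⟨A₂, M⟩` over `M ⪰ 0` with `⟨A₁, M⟩ = -p₁`) has an optimal solution of
rank at most 1. -/
theorem sdp_two_by_two_rank_one_optimal (A : Matrix (Fin 2) (Fin 2) ℝ)
    (hA : (-(A + Aᵀ)).PosDef) (p₁ : ℝ) (hp₁ : 0 ≤ p₁) :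
    ∃ M₀ : Matrix (Fin 2) (Fin 2) ℝ, M₀.PosSemidef ∧ ip (sdpMat A 0) M₀ = -p₁ ∧
      M₀.rank ≤ 1 ∧
      ∀ M : Matrix (Fin 2) (Fin 2) ℝ, M.PosSemidef → ip (sdpMat A 0) M = -p₁ →
        ip (sdpMat A 1) M ≤ ip (sdpMat A 1) M₀ := by
  obtain ⟨hd, had, hdet⟩ := entry_bounds_of_posDef_neg_add_transpose A hA
  obtain ⟨μ, w, hS, hw, hwB⟩ := exists_dual_certificate_fin_two A hd had hdet
  exact exists_rank_one_optimal_of_dual_certificate hS hw hwB hp₁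
end

section
/- Let r be a positive integer and suppose the symmetric n×n real matrices B_1,…,B_k are all r-diagonal, i.e., the (i,j) entry of each B_l vanishes unless |i − j| < r. If there exists a positive semidefinite matrix M with ⟨B_i, M⟩ = α_i ∈ ℝ for i = 1,…,k, then there exists a positive semidefinite matrix M₀ with ⟨B_i, M₀⟩ = α_i for i = 1,…,k and rank(M₀) ≤ r. -/
open Matrix

/-!
Write the PSD solution as a Gram matrix `M = (⟪vᵢ, vⱼ⟫)`. As every `Bₗ` is `r`-diagonal,
`⟨Bₗ, M⟩` only depends on the entries with `|i - j| < r`, so vectors `h₁, …, hₙ ∈ ℝʳ` with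
`⟪hᵢ, hⱼ⟫ = ⟪vᵢ, vⱼ⟫` on that band have a Gram matrix that is again a solution, now of rank at
most `r`. The `hᵢ` are chosen one at a time: `hₘ` only has to match the fewer than `r` preceding
vectors within the band, which have the same Gram matrix as the corresponding `vᵢ`. Combining
them with the coefficients of the projection of `vₘ` onto the span of those `vᵢ` gets the inner
products right, and since the span of the preceding `hᵢ` is a proper subspace of `ℝʳ`, an
orthogonal vector makes up the missing length.
-/

open Module Submodule
open scoped RealInnerProductSpace

variable {ι E F : Type*} [Fintype ι]
  [NormedAddCommGroup E] [InnerProductSpace ℝ E] [NormedAddCommGroup F] [InnerProductSpace ℝ F]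

theorem inner_sum_smul_eq_of_gram_eq {u : ι → E} {w : ι → F} (h : gram ℝ u = gram ℝ w)
    (c d : ι → ℝ) :
    ⟪∑ i, c i • u i, ∑ i, d i • u i⟫ = ⟪∑ i, c i • w i, ∑ i, d i • w i⟫ := by
  simpa only [star_trivial] using
    (star_dotProduct_gram_mulVec u c d).symm.trans (h ▸ star_dotProduct_gram_mulVec w c d)

theorem exists_mem_span_inner_eq_of_gram_eq {u : ι → E} {w : ι → F} (h : gram ℝ u = gram ℝ w)
    (y : F) : ∃ x ∈ span ℝ (Set.range u), (∀ i, ⟪u i, x⟫ = ⟪w i, y⟫) ∧ ‖x‖ ≤ ‖y‖ := by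
  set V := span ℝ (Set.range w)
  have : FiniteDimensional ℝ V := FiniteDimensional.span_of_finite ℝ (Set.finite_range w)
  obtain ⟨c, hc⟩ := (mem_span_range_iff_exists_fun ℝ).mp (V.starProjection_apply_mem y)
  refine ⟨∑ j, c j • u j, sum_mem fun j _ => smul_mem _ _ (subset_span ⟨j, rfl⟩), fun i => ?_, ?_⟩
  · have hwi : V.starProjection (w i) = w i :=
      starProjection_eq_self_iff.mpr (subset_span (Set.mem_range_self i))
    calc ⟪u i, ∑ j, c j • u j⟫ = ⟪w i, ∑ j, c j • w j⟫ := by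
          simp only [inner_sum, inner_smul_right, ← gram_apply (𝕜 := ℝ), h]
      _ = ⟪w i, y⟫ := by rw [hc, ← inner_starProjection_left_eq_right, hwi]
  · have := inner_sum_smul_eq_of_gram_eq h c c
    rw [real_inner_self_eq_norm_sq, real_inner_self_eq_norm_sq, hc] at this
    rw [← sq_le_sq₀ (norm_nonneg _) (norm_nonneg _), this]
    exact pow_le_pow_left₀ (norm_nonneg _) (V.norm_starProjection_apply_le y) 2

theorem exists_mem_orthogonal_norm_eq [FiniteDimensional ℝ E] {K : Submodule ℝ E}
    (hK : finrank ℝ K < finrank ℝ E) {c : ℝ} (hc : 0 ≤ c) : ∃ e ∈ Kᗮ, ‖e‖ = c := by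
  have : Nontrivial Kᗮ := by
    rw [← finrank_pos_iff (R := ℝ)]
    have := K.finrank_add_finrank_orthogonal
    omega
  obtain ⟨e, he⟩ := exists_norm_eq Kᗮ hc
  exact ⟨e, e.2, he⟩

theorem exists_inner_eq_and_norm_eq_of_gram_eq [FiniteDimensional ℝ E] {u : ι → E} {w : ι → F}
    (h : gram ℝ u = gram ℝ w) (hcard : Fintype.card ι < finrank ℝ E) (y : F) :
    ∃ x : E, (∀ i, ⟪u i, x⟫ = ⟪w i, y⟫) ∧ ‖x‖ = ‖y‖ := by
  obtain ⟨x₀, hx₀, hinner, hle⟩ := exists_mem_span_inner_eq_of_gram_eq h y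
  obtain ⟨e, he, hnorm⟩ := exists_mem_orthogonal_norm_eq
    ((finrank_range_le_card u).trans_lt hcard) (Real.sqrt_nonneg (‖y‖ ^ 2 - ‖x₀‖ ^ 2))
  refine ⟨x₀ + e, fun i => ?_, ?_⟩
  · rw [inner_add_right, hinner,
      inner_right_of_mem_orthogonal (subset_span (Set.mem_range_self i)) he, add_zero]
  · have hsq : ‖x₀ + e‖ ^ 2 = ‖y‖ ^ 2 := by
      rw [sq, sq, norm_add_sq_eq_norm_sq_add_norm_sq_real (inner_right_of_mem_orthogonal hx₀ he),
        hnorm, Real.mul_self_sqrt (sub_nonneg.mpr (pow_le_pow_left₀ (norm_nonneg _) hle 2))]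
      ring
    exact (sq_eq_sq₀ (norm_nonneg _) (norm_nonneg _)).mp hsq

theorem card_subtype_lt_and_lt_add_lt {n r : ℕ} (hr : 0 < r) (m : ℕ) :
    Fintype.card {j : Fin n // (j : ℕ) < m ∧ m < j + r} < r := by
  have hinj : Function.Injective
      fun j : {j : Fin n // (j : ℕ) < m ∧ m < j + r} => (⟨m - j - 1, by omega⟩ : Fin (r - 1)) := by
    intro a b hab
    have := congrArg Fin.val hab
    exact Subtype.ext (Fin.ext (by simp only at this; omega))
  have := Fintype.card_le_of_injective _ hinj
  simp only [Fintype.card_fin] at this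
  omega

theorem exists_band_gram_eq_succ [FiniteDimensional ℝ E] {n r : ℕ} (hr : 0 < r)
    (hrE : r ≤ finrank ℝ E) (w : Fin n → F) {m : ℕ} (hm : m < n) {h : Fin n → E}
    (hh : ∀ i j : Fin n, j ≤ i → (i : ℕ) < m → (i : ℕ) < j + r → ⟪h j, h i⟫ = ⟪w j, w i⟫) :
    ∃ h' : Fin n → E,
      ∀ i j : Fin n, j ≤ i → (i : ℕ) < m + 1 → (i : ℕ) < j + r → ⟪h' j, h' i⟫ = ⟪w j, w i⟫ := by
  set window := {j : Fin n // (j : ℕ) < m ∧ m < j + r}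
  have hgram : gram ℝ (fun j : window => h j) = gram ℝ (fun j : window => w j) := by
    ext a b
    simp only [gram_apply]
    rcases le_total a.1 b.1 with hab | hab
    · exact hh b a hab b.2.1 (by omega)
    · rw [real_inner_comm (h b), real_inner_comm (w b)]
      exact hh a b hab a.2.1 (by omega)
  obtain ⟨x, hx, hnorm⟩ := exists_inner_eq_and_norm_eq_of_gram_eq hgram
    ((card_subtype_lt_and_lt_add_lt hr m).trans_le hrE) (w ⟨m, hm⟩)
  refine ⟨Function.update h ⟨m, hm⟩ x, fun i j hji hi hij => ?_⟩
  rcases Nat.lt_succ_iff_lt_or_eq.mp hi with hi | hi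
  · have hi' : i < ⟨m, hm⟩ := hi
    rw [Function.update_of_ne hi'.ne, Function.update_of_ne (hji.trans_lt hi').ne]
    exact hh i j hji hi hij
  obtain rfl : i = ⟨m, hm⟩ := Fin.ext hi
  rw [Function.update_self]
  rcases hji.lt_or_eq with hji | rfl
  · rw [Function.update_of_ne hji.ne]
    exact hx ⟨j, hji, hij⟩
  · rw [Function.update_self, real_inner_self_eq_norm_sq, real_inner_self_eq_norm_sq, hnorm]

theorem exists_band_gram_eq [FiniteDimensional ℝ E] {n r : ℕ} (hrE : r ≤ finrank ℝ E)
    (w : Fin n → F) :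
    ∃ h : Fin n → E, ∀ i j : Fin n, |(i : ℤ) - j| < r → ⟪h i, h j⟫ = ⟪w i, w j⟫ := by
  rcases Nat.eq_zero_or_pos r with rfl | hr
  · exact ⟨0, fun i j hij => absurd hij (by simp)⟩
  have key : ∀ m ≤ n, ∃ h : Fin n → E,
      ∀ i j : Fin n, j ≤ i → (i : ℕ) < m → (i : ℕ) < j + r → ⟪h j, h i⟫ = ⟪w j, w i⟫ := by
    intro m
    induction m with
    | zero => exact fun _ => ⟨0, fun i j _ hi _ => absurd hi (Nat.not_lt_zero _)⟩
    | succ m ih =>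
      intro hm
      obtain ⟨h, hh⟩ := ih (Nat.le_of_succ_le hm)
      exact exists_band_gram_eq_succ hr hrE w hm hh
  obtain ⟨h, hh⟩ := key n le_rfl
  refine ⟨h, fun i j hij => ?_⟩
  rw [abs_lt] at hij
  rcases le_total j i with hji | hji
  · rw [real_inner_comm (h j), real_inner_comm (w j)]
    exact hh i j hji i.2 (by omega)
  · exact hh j i hji j.2 (by omega)

open scoped ComplexOrder MatrixOrder in
theorem Matrix.PosSemidef.exists_eq_gram {𝕜 n : Type*} [RCLike 𝕜] [Fintype n]
    {M : Matrix n n 𝕜} (hM : M.PosSemidef) : ∃ v : n → EuclideanSpace 𝕜 n, M = gram 𝕜 v := by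
  classical
  obtain ⟨B, rfl⟩ := CStarAlgebra.nonneg_iff_eq_star_mul_self.mp hM.nonneg
  refine ⟨fun i => WithLp.toLp 2 fun k => B k i, ?_⟩
  ext i j
  simp [mul_apply, PiLp.inner_apply, mul_comm]

theorem Matrix.rank_gram_le [FiniteDimensional ℝ E] (v : ι → E) :
    (gram ℝ v).rank ≤ finrank ℝ E := by
  rw [gram_eq_conjTranspose_mul (stdOrthonormalBasis ℝ E), rank_conjTranspose_mul_self]
  exact (rank_le_card_height _).trans_eq (Fintype.card_fin _)

theorem ip_congr_right {m : ℕ} {X Y Z : Matrix (Fin m) (Fin m) ℝ}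
    (h : ∀ i j, X i j ≠ 0 → Y j i = Z j i) : ip X Y = ip X Z := by
  simp only [ip, trace, diag, mul_apply]
  refine Finset.sum_congr rfl fun i _ => Finset.sum_congr rfl fun j _ => ?_
  by_cases hX : X i j = 0
  · simp [hX]
  · rw [h i j hX]

theorem low_rank_solution_of_r_diagonal_general (r n k : ℕ)
    (B : Fin k → Matrix (Fin n) (Fin n) ℝ)
    (hdiag : ∀ (l : Fin k) (i j : Fin n), B l i j ≠ 0 → |(i : ℤ) - (j : ℤ)| < r)
    (α : Fin k → ℝ)
    (hex : ∃ M : Matrix (Fin n) (Fin n) ℝ, M.PosSemidef ∧ ∀ i, ip (B i) M = α i) :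
    ∃ M₀ : Matrix (Fin n) (Fin n) ℝ, M₀.PosSemidef ∧ (∀ i, ip (B i) M₀ = α i) ∧
      M₀.rank ≤ r := by
  obtain ⟨M, hM, hMα⟩ := hex
  obtain ⟨v, rfl⟩ := hM.exists_eq_gram
  obtain ⟨h, hh⟩ :=
    exists_band_gram_eq (E := EuclideanSpace ℝ (Fin r)) finrank_euclideanSpace_fin.ge v
  refine ⟨gram ℝ h, posSemidef_gram ℝ h, fun l => ?_,
    (rank_gram_le h).trans_eq finrank_euclideanSpace_fin⟩
  rw [← hMα l]
  refine ip_congr_right fun i j hij => ?_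
  simpa only [gram_apply] using hh j i (abs_sub_comm (i : ℤ) j ▸ hdiag l i j hij)

/-- Barvinok: if the symmetric matrices `B₁, …, B_k` are all `r`-diagonal (entries vanish
unless `|i - j| < r`) and the system `⟨B_i, M⟩ = α_i`, `M ⪰ 0` is solvable, then it has a
solution of rank at most `r`. -/
theorem low_rank_solution_of_r_diagonal (r n k : ℕ) (hr : 0 < r)
    (B : Fin k → Matrix (Fin n) (Fin n) ℝ) (hB : ∀ l, (B l).IsSymm)
    (hdiag : ∀ (l : Fin k) (i j : Fin n), B l i j ≠ 0 → |(i : ℤ) - (j : ℤ)| < r)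
    (α : Fin k → ℝ)
    (hex : ∃ M : Matrix (Fin n) (Fin n) ℝ, M.PosSemidef ∧ ∀ i, ip (B i) M = α i) :
    ∃ M₀ : Matrix (Fin n) (Fin n) ℝ, M₀.PosSemidef ∧ (∀ i, ip (B i) M₀ = α i) ∧
      M₀.rank ≤ r :=
  low_rank_solution_of_r_diagonal_general r n k B hdiag α hex
end

section
/- Let ξ > 0 and set x₀ = √(1 + ξ²) − ξ. Then x₀ ∈ [0, 1/ξ], and the function f(x) = (x − ξx²)/(x + ξ) satisfies f(x) ≤ x₀² for every x ∈ [0, 1/ξ], with equality exactly at x = x₀; i.e., f attains its maximum value f(x₀) = x₀² on [0, 1/ξ] at the unique point x₀. -/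
/-- For `ξ > 0` and `x₀ = √(1 + ξ²) − ξ`, we have `x₀ ∈ [0, 1/ξ]`, and the function
`f(x) = (x − ξx²)/(x + ξ)` satisfies `f(x) ≤ x₀²` on `[0, 1/ξ]` with equality exactly at
`x = x₀`; i.e. `f` attains its maximum `f(x₀) = x₀²` on `[0, 1/ξ]` at the unique point
`x₀`. -/
theorem max_of_transfer_function (ξ : ℝ) (hξ : 0 < ξ)
    (x₀ : ℝ) (hx₀ : x₀ = Real.sqrt (1 + ξ ^ 2) - ξ) :
    x₀ ∈ Set.Icc 0 (1 / ξ) ∧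
    (x₀ - ξ * x₀ ^ 2) / (x₀ + ξ) = x₀ ^ 2 ∧
    ∀ x ∈ Set.Icc (0 : ℝ) (1 / ξ),
      (x - ξ * x ^ 2) / (x + ξ) ≤ x₀ ^ 2 ∧
      ((x - ξ * x ^ 2) / (x + ξ) = x₀ ^ 2 ↔ x = x₀) := by
  have h1 : (0:ℝ) < 1 + ξ ^ 2 := by positivity
  have hs : Real.sqrt (1 + ξ ^ 2) ^ 2 = 1 + ξ ^ 2 := Real.sq_sqrt h1.le
  have hsξ : ξ < Real.sqrt (1 + ξ ^ 2) := by
    nlinarith [Real.sqrt_nonneg (1 + ξ ^ 2)]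
  have hx0pos : 0 < x₀ := by rw [hx₀]; linarith
  -- key: x₀² + 2ξx₀ - 1 = 0
  have hkey : x₀ ^ 2 + 2 * ξ * x₀ - 1 = 0 := by
    rw [hx₀]; nlinarith [hs]
  have hx0le : x₀ ≤ 1 / ξ := by
    rw [le_div_iff₀ hξ]; nlinarith
  refine ⟨⟨hx0pos.le, hx0le⟩, ?_, ?_⟩
  · have : x₀ + ξ ≠ 0 := by positivity
    field_simp
    nlinarith
  · intro x ⟨hx0, hx1⟩
    have hxξ : 0 < x + ξ := by linarith
    have hmain : (x - ξ * x ^ 2) / (x + ξ) - x₀ ^ 2 = -ξ * (x - x₀) ^ 2 / (x + ξ) := by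
      field_simp
      nlinarith [hkey]
    constructor
    · have : -ξ * (x - x₀) ^ 2 / (x + ξ) ≤ 0 :=
        div_nonpos_of_nonpos_of_nonneg (by nlinarith [sq_nonneg (x - x₀)]) hxξ.le
      linarith [hmain]
    · constructor
      · intro h
        have h2 : -ξ * (x - x₀) ^ 2 / (x + ξ) = 0 := by rw [← hmain, h]; ring
        have h3 : -ξ * (x - x₀) ^ 2 = 0 := by
          field_simp at h2; linarith
        have : (x - x₀) ^ 2 = 0 := by
          rcases mul_eq_zero.1 h3 with h | h
          · linarith
          · exact h
        nlinarith [this]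
      · intro h; subst h
        have : x + ξ ≠ 0 := hxξ.ne'
        field_simp
        nlinarith
end

section
/- Let ξ > 0 and set x₀ = √(ξ² + 2) − ξ. Then x₀ belongs to the interval [ξ/(1+ξ²), 1/ξ], and the function f(x) = (−ξ(1+ξ²)x² + (1+2ξ²)x − ξ)/(x + ξ) satisfies f(x) ≤ x₀⁴/4 for every x ∈ [ξ/(1+ξ²), 1/ξ], with equality at x = x₀; i.e., the maximum of f on this interval equals x₀⁴/4 and is attained at x₀. -/
/-- For `ξ > 0` and `x₀ = √(ξ² + 2) − ξ`, we have `x₀ ∈ [ξ/(1+ξ²), 1/ξ]`, and the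
function `f(x) = (−ξ(1+ξ²)x² + (1+2ξ²)x − ξ)/(x + ξ)` satisfies `f(x) ≤ x₀⁴/4` on this
interval, with equality at `x = x₀`; i.e. the maximum of `f` on the interval equals
`x₀⁴/4` and is attained at `x₀`. -/
theorem max_of_three_spin_transfer_function (ξ : ℝ) (hξ : 0 < ξ)
    (x₀ : ℝ) (hx₀ : x₀ = Real.sqrt (ξ ^ 2 + 2) - ξ) :
    x₀ ∈ Set.Icc (ξ / (1 + ξ ^ 2)) (1 / ξ) ∧
    (-ξ * (1 + ξ ^ 2) * x₀ ^ 2 + (1 + 2 * ξ ^ 2) * x₀ - ξ) / (x₀ + ξ) = x₀ ^ 4 / 4 ∧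
    ∀ x ∈ Set.Icc (ξ / (1 + ξ ^ 2)) (1 / ξ),
      (-ξ * (1 + ξ ^ 2) * x ^ 2 + (1 + 2 * ξ ^ 2) * x - ξ) / (x + ξ) ≤ x₀ ^ 4 / 4 := by
  have hs0 : (0:ℝ) ≤ ξ ^ 2 + 2 := by positivity
  have hs : Real.sqrt (ξ ^ 2 + 2) ^ 2 = ξ ^ 2 + 2 := Real.sq_sqrt hs0
  have hsn : 0 ≤ Real.sqrt (ξ ^ 2 + 2) := Real.sqrt_nonneg _
  have h1 : x₀ ^ 2 + 2 * ξ * x₀ - 2 = 0 := by subst hx₀; nlinarith [hs]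
  have hx0pos : 0 < x₀ := by subst hx₀; nlinarith [hs, hsn]
  have hup : ξ * x₀ ≤ 1 := by subst hx₀; nlinarith [hs, hsn, sq_nonneg ξ]
  have h1ξ : (0:ℝ) < 1 + ξ ^ 2 := by positivity
  have hlo : ξ / (1 + ξ ^ 2) ≤ x₀ := by
    rw [div_le_iff₀ h1ξ]; nlinarith [h1, hx0pos, hup]
  have hub : x₀ ≤ 1 / ξ := by
    rw [le_div_iff₀ hξ]; linarith [hup]
  refine ⟨⟨hlo, hub⟩, ?_, ?_⟩
  · have hd : x₀ + ξ > 0 := by linarith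
    rw [div_eq_div_iff (by linarith) (by norm_num)]
    linear_combination (-x₀ ^ 3 + ξ * x₀ ^ 2 - 2 * (1 + ξ ^ 2) * x₀ + 2 * ξ) * h1
  · intro x hx
    have hxlo : ξ / (1 + ξ ^ 2) ≤ x := hx.1
    have hxpos : 0 < x := lt_of_lt_of_le (by positivity) hxlo
    have hd : 0 < x + ξ := by linarith
    have key : x₀ ^ 4 / 4 * (x + ξ) - (-ξ * (1 + ξ ^ 2) * x ^ 2 + (1 + 2 * ξ ^ 2) * x - ξ)
        = ξ * (1 + ξ ^ 2) * (x - x₀) ^ 2 := by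
      linear_combination ((x + ξ) / 4 * x₀ ^ 2 - (x + ξ) * ξ / 2 * x₀
        + x * (1 / 2 + ξ ^ 2) - ξ / 2) * h1
    rw [div_le_iff₀ hd]
    nlinarith [key, mul_nonneg (mul_nonneg hξ.le h1ξ.le) (sq_nonneg (x - x₀))]
end

section
/- Let ξ > 0 and set x₀ = √(1 + ξ²) − ξ. Let u₁, u₂ : [0,∞) → [−1,1] be measurable and let (r₁, r₂) : [0,∞) → ℝ² be absolutely continuous with ṙ₁ = −ξ u₁² r₁ − u₁u₂ r₂ and ṙ₂ = u₁u₂ r₁ − ξ u₂² r₂ almost everywhere. Then the function t ↦ r₂(t)² + x₀² r₁(t)² is nonincreasing (its a.e. derivative equals −2ξ (x₀ u₁ r₁ − u₂ r₂)² ≤ 0). In particular, if (r₁(0), r₂(0)) = (1, 0), then r₂(t)² + x₀² r₁(t)² ≤ x₀² for all t ≥ 0, so r₂(t) ≤ x₀ = √(1 + ξ²) − ξ for all t ≥ 0. -/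
/-!
With `x₀` the positive root of `x² + 2ξx - 1`, the quadratic form `V = r₂² + x₀² r₁²` is a
Lyapunov function: along the flow, `V̇ = -2ξ (x₀u₁r₁ - u₂r₂)²`, the cross terms `u₁u₂r₁r₂`
cancelling exactly by the choice of `x₀`. The trajectories are primitives of locally integrable
functions, hence absolutely continuous, and so is `V`; the fundamental theorem of calculus for
absolutely continuous functions turns `V̇ ≤ 0` a.e. into monotonicity. Starting from `(1, 0)`,
`r₂² ≤ V ≤ V(0) = x₀²`.
-/

open MeasureTheory Set Filter

theorem AbsolutelyContinuousOnInterval.congr {X : Type*} [PseudoMetricSpace X] {f g : ℝ → X}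
    {a b : ℝ} (hf : AbsolutelyContinuousOnInterval f a b) (hfg : EqOn f g (uIcc a b)) :
    AbsolutelyContinuousOnInterval g a b :=
  Tendsto.congr' (eventually_inf_principal.2 <| Eventually.of_forall fun _E hE ↦
    Finset.sum_congr rfl fun i hi ↦ by rw [hfg (hE.1 i hi).1, hfg (hE.1 i hi).2]) hf

theorem AbsolutelyContinuousOnInterval.le_of_ae_deriv_nonpos {f : ℝ → ℝ} {a b : ℝ}
    (hf : AbsolutelyContinuousOnInterval f a b) (hab : a ≤ b)
    (hf' : ∀ᵐ x, x ∈ Ioc a b → deriv f x ≤ 0) : f b ≤ f a := by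
  rw [← sub_nonpos, ← hf.integral_deriv_eq_sub, intervalIntegral.integral_of_le hab]
  exact setIntegral_nonpos_ae measurableSet_Ioc hf'

theorem MeasureTheory.LocallyIntegrable.bdd_mul {X : Type*} [TopologicalSpace X]
    [MeasurableSpace X] {μ : Measure X} {f g : X → ℝ} {C : ℝ} (hf : LocallyIntegrable f μ)
    (hg : AEStronglyMeasurable g μ) (hgC : ∀ x, ‖g x‖ ≤ C) :
    LocallyIntegrable (fun x ↦ g x * f x) μ := fun x ↦
  let ⟨U, hU, hfU⟩ := hf x
  ⟨U, hU, hfU.bdd_mul hg.restrict (ae_of_all _ hgC)⟩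

section Primitive

variable {f F : ℝ → ℝ} {c : ℝ}

theorem eqOn_add_intervalIntegral_of_eq_add_integral
    (hF : ∀ t ≥ c, F t = F c + ∫ s in Ioc c t, f s) :
    EqOn F (fun t ↦ F c + ∫ s in c..t, f s) (Ici c) := fun t ht ↦ by
  simp only [intervalIntegral.integral_of_le (show c ≤ t from ht)]
  exact hF t ht

theorem absolutelyContinuousOnInterval_of_eq_add_integral (hf : LocallyIntegrable f)
    (hF : ∀ t ≥ c, F t = F c + ∫ s in Ioc c t, f s) {a b : ℝ} (hca : c ≤ a) (hab : a ≤ b) :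
    AbsolutelyContinuousOnInterval F a b := by
  have hsub : uIcc a b ⊆ Icc c b := by
    rw [uIcc_of_le hab]; exact Icc_subset_Icc_left hca
  have hprim := ((hf.integrableOn_isCompact isCompact_uIcc).intervalIntegrable
    |>.absolutelyContinuousOnInterval_intervalIntegral left_mem_uIcc).mono
    (hsub.trans Icc_subset_uIcc)
  refine ((LipschitzWith.const (F c)).lipschitzOnWith.absolutelyContinuousOnInterval.add
    hprim).congr fun t ht ↦ ?_
  exact (eqOn_add_intervalIntegral_of_eq_add_integral hF (hsub ht).1).symm

theorem ae_hasDerivAt_of_eq_add_integral (hf : LocallyIntegrable f)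
    (hF : ∀ t ≥ c, F t = F c + ∫ s in Ioc c t, f s) :
    ∀ᵐ t, c < t → HasDerivAt F (f t) t := by
  filter_upwards [LocallyIntegrable.ae_hasDerivAt_integral hf] with t ht hct
  refine ((ht c).const_add (F c)).congr_of_eventuallyEq ?_
  filter_upwards [Ici_mem_nhds hct] with s hs
  exact eqOn_add_intervalIntegral_of_eq_add_integral hF hs

end Primitive

theorem sqrt_one_add_sq_sub_sq_add_two_mul (ξ : ℝ) :
    (√(1 + ξ ^ 2) - ξ) ^ 2 + 2 * ξ * (√(1 + ξ ^ 2) - ξ) = 1 := by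
  linear_combination Real.sq_sqrt (by positivity : (0 : ℝ) ≤ 1 + ξ ^ 2)

theorem sqrt_one_add_sq_sub_pos (ξ : ℝ) : 0 < √(1 + ξ ^ 2) - ξ := by
  rw [sub_pos]
  calc ξ ≤ |ξ| := le_abs_self ξ
    _ = √(ξ ^ 2) := (Real.sqrt_sq_eq_abs ξ).symm
    _ < √(1 + ξ ^ 2) := Real.sqrt_lt_sqrt (sq_nonneg ξ) (lt_one_add _)

theorem two_spin_lyapunov_dissipation {ξ x₀ : ℝ} (hx₀ : x₀ ^ 2 + 2 * ξ * x₀ = 1)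
    (u₁ u₂ r₁ r₂ : ℝ) :
    2 * r₂ * (u₁ * u₂ * r₁ - ξ * u₂ ^ 2 * r₂)
        + x₀ ^ 2 * (2 * r₁ * (-ξ * u₁ ^ 2 * r₁ - u₁ * u₂ * r₂))
      = -2 * ξ * (x₀ * u₁ * r₁ - u₂ * r₂) ^ 2 := by
  linear_combination (-2 * u₁ * u₂ * r₁ * r₂) * hx₀

theorem norm_mul_sq_le_abs_of_abs_le_one {u : ℝ} (hu : |u| ≤ 1) (c : ℝ) :
    ‖c * u ^ 2‖ ≤ |c| := by
  rw [Real.norm_eq_abs, abs_mul, abs_pow]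
  exact mul_le_of_le_one_right (abs_nonneg c) (pow_le_one₀ (abs_nonneg u) hu)

theorem norm_mul_le_one_of_abs_le_one {u v : ℝ} (hu : |u| ≤ 1) (hv : |v| ≤ 1) :
    ‖u * v‖ ≤ 1 := by
  rw [Real.norm_eq_abs, abs_mul]
  exact mul_le_one₀ hu (abs_nonneg v) hv

theorem two_spin_field_locallyIntegrable (ξ : ℝ) {u₁ u₂ r₁ r₂ : ℝ → ℝ}
    (hu₁ : Measurable u₁) (hu₂ : Measurable u₂) (hub₁ : ∀ t, |u₁ t| ≤ 1)
    (hub₂ : ∀ t, |u₂ t| ≤ 1) (hr₁ : Continuous r₁) (hr₂ : Continuous r₂) :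
    LocallyIntegrable (fun s ↦ -ξ * u₁ s ^ 2 * r₁ s - u₁ s * u₂ s * r₂ s) ∧
      LocallyIntegrable (fun s ↦ u₁ s * u₂ s * r₁ s - ξ * u₂ s ^ 2 * r₂ s) := by
  have hu : ∀ s, ‖u₁ s * u₂ s‖ ≤ 1 := fun s ↦ norm_mul_le_one_of_abs_le_one (hub₁ s) (hub₂ s)
  have hr₁' := hr₁.locallyIntegrable (μ := volume)
  have hr₂' := hr₂.locallyIntegrable (μ := volume)
  exact ⟨(hr₁'.bdd_mul (by fun_prop) fun s ↦ norm_mul_sq_le_abs_of_abs_le_one (hub₁ s) (-ξ)).sub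
      (hr₂'.bdd_mul (by fun_prop) hu),
    (hr₁'.bdd_mul (by fun_prop) hu).sub
      (hr₂'.bdd_mul (by fun_prop) fun s ↦ norm_mul_sq_le_abs_of_abs_le_one (hub₂ s) ξ)⟩

/-- For the two-dimensional dissipative bilinear system
`ṙ₁ = -ξu₁²r₁ - u₁u₂r₂`, `ṙ₂ = u₁u₂r₁ - ξu₂²r₂` with controls `|uᵢ| ≤ 1` and
`x₀ = √(1 + ξ²) − ξ`, the function `t ↦ r₂² + x₀² r₁²` is nonincreasing on `[0, ∞)`
(its a.e. derivative equals `-2ξ(x₀u₁r₁ - u₂r₂)² ≤ 0`); in particular, starting from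
`(r₁, r₂)(0) = (1, 0)` one has `r₂(t)² + x₀² r₁(t)² ≤ x₀²`, hence `r₂(t) ≤ x₀` for all
`t ≥ 0`. Trajectories are absolutely continuous, encoded via the fundamental theorem of
calculus. -/
theorem two_spin_transfer_bound (ξ : ℝ) (hξ : 0 < ξ)
    (x₀ : ℝ) (hx₀ : x₀ = Real.sqrt (1 + ξ ^ 2) - ξ)
    (u₁ u₂ : ℝ → ℝ) (hu₁ : Measurable u₁) (hu₂ : Measurable u₂)
    (hub₁ : ∀ t, |u₁ t| ≤ 1) (hub₂ : ∀ t, |u₂ t| ≤ 1)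
    (r₁ r₂ : ℝ → ℝ) (hr₁ : Continuous r₁) (hr₂ : Continuous r₂)
    (h₁ : ∀ t ≥ (0 : ℝ), r₁ t = r₁ 0 +
      ∫ s in Set.Ioc (0 : ℝ) t, (-ξ * (u₁ s) ^ 2 * r₁ s - u₁ s * u₂ s * r₂ s))
    (h₂ : ∀ t ≥ (0 : ℝ), r₂ t = r₂ 0 +
      ∫ s in Set.Ioc (0 : ℝ) t, (u₁ s * u₂ s * r₁ s - ξ * (u₂ s) ^ 2 * r₂ s)) :
    AntitoneOn (fun t => (r₂ t) ^ 2 + x₀ ^ 2 * (r₁ t) ^ 2) (Set.Ici 0) ∧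
    (∀ᵐ t ∂(volume.restrict (Set.Ioi (0 : ℝ))),
      HasDerivAt (fun s => (r₂ s) ^ 2 + x₀ ^ 2 * (r₁ s) ^ 2)
        (-2 * ξ * (x₀ * u₁ t * r₁ t - u₂ t * r₂ t) ^ 2) t ∧
      -2 * ξ * (x₀ * u₁ t * r₁ t - u₂ t * r₂ t) ^ 2 ≤ 0) ∧
    (r₁ 0 = 1 → r₂ 0 = 0 → ∀ t ≥ (0 : ℝ),
      (r₂ t) ^ 2 + x₀ ^ 2 * (r₁ t) ^ 2 ≤ x₀ ^ 2 ∧ r₂ t ≤ x₀) := by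
  set V : ℝ → ℝ := fun t ↦ r₂ t ^ 2 + x₀ ^ 2 * r₁ t ^ 2
  obtain ⟨hf₁, hf₂⟩ := two_spin_field_locallyIntegrable ξ hu₁ hu₂ hub₁ hub₂ hr₁ hr₂
  have hV' : ∀ᵐ t, 0 < t → HasDerivAt V (-2 * ξ * (x₀ * u₁ t * r₁ t - u₂ t * r₂ t) ^ 2) t ∧
      -2 * ξ * (x₀ * u₁ t * r₁ t - u₂ t * r₂ t) ^ 2 ≤ 0 := by
    filter_upwards [ae_hasDerivAt_of_eq_add_integral hf₁ h₁,
      ae_hasDerivAt_of_eq_add_integral hf₂ h₂] with t hr₁' hr₂' ht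
    refine ⟨((hr₂' ht).pow 2).add (((hr₁' ht).pow 2).const_mul _) |>.congr_deriv ?_, ?_⟩
    · rw [← two_spin_lyapunov_dissipation (hx₀ ▸ sqrt_one_add_sq_sub_sq_add_two_mul ξ)]
      ring
    · exact mul_nonpos_of_nonpos_of_nonneg (by linarith) (sq_nonneg _)
  have hanti : AntitoneOn V (Ici 0) := by
    intro a ha b _ hab
    have hac₁ := absolutelyContinuousOnInterval_of_eq_add_integral hf₁ h₁ ha hab
    have hac₂ := absolutelyContinuousOnInterval_of_eq_add_integral hf₂ h₂ ha hab
    refine ((hac₂.fun_mul hac₂).add ((hac₁.fun_mul hac₁).const_mul (x₀ ^ 2))).congr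
      (fun t _ ↦ by simp only [V, sq, Pi.add_apply]) |>.le_of_ae_deriv_nonpos hab ?_
    filter_upwards [hV'] with t ht htab
    rw [(ht (ha.trans_lt htab.1)).1.deriv]
    exact (ht (ha.trans_lt htab.1)).2
  refine ⟨hanti, (ae_restrict_iff' measurableSet_Ioi).2 hV', fun h10 h20 t ht ↦ ?_⟩
  have hVt : V t ≤ x₀ ^ 2 := by simpa [V, h10, h20] using hanti self_mem_Ici ht ht
  have hx₀_pos : 0 < x₀ := hx₀ ▸ sqrt_one_add_sq_sub_pos ξ
  have hr₂t : r₂ t ^ 2 ≤ x₀ ^ 2 := le_of_add_le_of_nonneg_left hVt (by positivity)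
  exact ⟨hVt, (abs_le_of_sq_le_sq' hr₂t hx₀_pos.le).2⟩
end
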